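/- arXiv:2605.16875 — 3 statements merged into one kernel-verified Lean document; each statement's English description precedes it below -/
import Mathlib

section
/- Uniform stability of the empirical minimizer under strong convexity: let f(·,ξ) be μ-strongly convex and M-Lipschitz on a convex set Q ⊆ ℝⁿ (in a norm ‖·‖), let x̄ minimize f̄(x) = (1/N)Σ_{k=1}^N f(x,ξᵏ) over Q and x̄⁽ⁱ⁾ minimize the leave-one-out average f̄⁽ⁱ⁾(x) = (1/N)Σ_{k≠i} f(x,ξᵏ). Then ‖x̄⁽ⁱ⁾ - x̄‖ ≤ 2M/(μN), and consequently |f(x̄⁽ⁱ⁾,ξ) - f(x̄,ξ)| ≤ 2M²/(μN) for every ξ. -/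
open Finset RealInnerProductSpace Filter Topology

/-!
The empirical objective `∑ₖ f(·, ξᵏ)` is `Nμ`-strongly convex, so it grows quadratically away from
its minimizer `x̄`: `F(x̄⁽ⁱ⁾) - F(x̄) ≥ Nμ/2 ‖x̄⁽ⁱ⁾ - x̄‖²`. Splitting `F = f(·, ξⁱ) + F⁽ⁱ⁾` and using
that `x̄⁽ⁱ⁾` minimizes `F⁽ⁱ⁾`, this difference is at most `f(x̄⁽ⁱ⁾, ξⁱ) - f(x̄, ξⁱ) ≤ M ‖x̄⁽ⁱ⁾ - x̄‖`,
which gives the distance bound; the bound on function values is one more Lipschitz estimate.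
-/

section StrongConvexity

variable {E : Type*} [NormedAddCommGroup E] [InnerProductSpace ℝ E] {s : Set E}

lemma strongConvexOn_of_le_add_inner {F : E → ℝ} {G : E → E} {m : ℝ} (hs : Convex ℝ s)
    (h : ∀ x ∈ s, ∀ y ∈ s, F x + ⟪G x, y - x⟫ + m / 2 * ‖y - x‖ ^ 2 ≤ F y) :
    StrongConvexOn s m F := by
  refine ⟨hs, fun x hx y hy a b ha hb hab ↦ ?_⟩
  have hz : a • x + b • y ∈ s := hs hx hy ha hb hab
  obtain rfl : b = 1 - a := by linarith
  set z := a • x + (1 - a) • y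
  have hxz : x - z = (1 - a) • (x - y) := by module
  have hyz : y - z = -a • (x - y) := by module
  have h1 := h z hz x hx
  have h2 := h z hz y hy
  rw [hxz, inner_smul_right, norm_smul, mul_pow, Real.norm_of_nonneg hb] at h1
  rw [hyz, inner_smul_right, norm_smul, mul_pow, norm_neg, Real.norm_of_nonneg ha] at h2
  simp only [smul_eq_mul]
  -- In the `a`, `1 - a` combination of the two bounds at `z` the gradient terms cancel.
  nlinarith [mul_le_mul_of_nonneg_left h1 ha, mul_le_mul_of_nonneg_left h2 hb]

lemma StrongConvexOn.add {f g : E → ℝ} {m n : ℝ} (hf : StrongConvexOn s m f)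
    (hg : StrongConvexOn s n g) : StrongConvexOn s (m + n) (f + g) :=
  (UniformConvexOn.add hf hg).mono fun r ↦ le_of_eq <| by simp only [Pi.add_apply]; ring

lemma StrongConvexOn.sum {ι : Type*} (hs : Convex ℝ s) (t : Finset ι) {f : ι → E → ℝ}
    {m : ι → ℝ} (h : ∀ k ∈ t, StrongConvexOn s (m k) (f k)) :
    StrongConvexOn s (∑ k ∈ t, m k) (∑ k ∈ t, f k) := by
  classical
  induction t using Finset.induction_on with
  | empty => simpa [Pi.zero_def] using convexOn_const (0 : ℝ) hs
  | insert k t hk ih =>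
    rw [sum_insert hk, sum_insert hk]
    exact (h k (mem_insert_self k t)).add (ih fun j hj ↦ h j (mem_insert_of_mem hj))

lemma StrongConvexOn.add_sq_norm_sub_le_of_isMinOn {f : E → ℝ} {m : ℝ} {x y : E}
    (hf : StrongConvexOn s m f) (hx : x ∈ s) (hmin : IsMinOn f s x) (hy : y ∈ s) :
    f x + m / 2 * ‖y - x‖ ^ 2 ≤ f y := by
  set A := m / 2 * ‖y - x‖ ^ 2 with hA
  -- Comparing `f x` with `f` at `(1 - t) • x + t • y` gives `(1 - t) * A ≤ f y - f x`; let `t → 0`.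
  have hseg : ∀ t ∈ Set.Ioo (0 : ℝ) 1, (1 - t) * A ≤ f y - f x := by
    rintro t ⟨ht0, ht1⟩
    have hconv := hf.2 hx hy (sub_nonneg.2 ht1.le) ht0.le (sub_add_cancel 1 t)
    have hle := isMinOn_iff.1 hmin _
      (hf.1 hx hy (sub_nonneg.2 ht1.le) ht0.le (sub_add_cancel 1 t))
    simp only [smul_eq_mul, norm_sub_rev x y, ← hA] at hconv
    have h : t * ((1 - t) * A) ≤ t * (f y - f x) := by linarith
    exact le_of_mul_le_mul_left h ht0
  have hlim : Tendsto (fun t : ℝ ↦ (1 - t) * A) (𝓝[>] 0) (𝓝 A) := by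
    have : Continuous fun t : ℝ ↦ (1 - t) * A := by fun_prop
    exact (this.tendsto' 0 A (by simp)).mono_left nhdsWithin_le_nhds
  have := le_of_tendsto hlim (eventually_of_mem (Ioo_mem_nhdsGT one_pos) hseg)
  linarith

lemma StrongConvexOn.norm_sub_le_of_isMinOn_add {φ T : E → ℝ} {m M : ℝ} {x y : E}
    (hm : 0 < m) (hM : 0 ≤ M) (hF : StrongConvexOn s m (φ + T)) (hx : x ∈ s)
    (hmin : IsMinOn (φ + T) s x) (hy : y ∈ s) (hT : T y ≤ T x)
    (hφ : |φ y - φ x| ≤ M * ‖y - x‖) :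
    ‖y - x‖ ≤ 2 * M / m := by
  have hgrowth := hF.add_sq_norm_sub_le_of_isMinOn hx hmin hy
  simp only [Pi.add_apply] at hgrowth
  have hquad : m / 2 * ‖y - x‖ ^ 2 ≤ M * ‖y - x‖ := by
    linarith [le_abs_self (φ y - φ x)]
  rw [le_div_iff₀ hm]
  rcases (norm_nonneg (y - x)).eq_or_lt with h0 | hpos
  · rw [← h0]; linarith
  · nlinarith

end StrongConvexity

theorem uniform_stability_erm_general
    {n : ℕ} {Ξ : Type*} (Q : Set (EuclideanSpace ℝ (Fin n))) (hQ : Convex ℝ Q)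
    (f : EuclideanSpace ℝ (Fin n) → Ξ → ℝ)
    (g : EuclideanSpace ℝ (Fin n) → Ξ → EuclideanSpace ℝ (Fin n))
    (μ M : ℝ) (hμ : 0 < μ) (hM : 0 < M)
    (hsc : ∀ ξ, ∀ x ∈ Q, ∀ y ∈ Q,
      f y ξ ≥ f x ξ + ⟪g x ξ, y - x⟫ + μ / 2 * ‖y - x‖ ^ 2)
    (hlip : ∀ ξ, ∀ x ∈ Q, ∀ y ∈ Q, |f y ξ - f x ξ| ≤ M * ‖y - x‖)
    (N : ℕ) (ξs : Fin N → Ξ) (i : Fin N)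
    (xbar xbari : EuclideanSpace ℝ (Fin n))
    (hxbar_mem : xbar ∈ Q)
    (hxbar_min : ∀ y ∈ Q,
      (1 / (N : ℝ)) * ∑ k, f xbar (ξs k) ≤ (1 / (N : ℝ)) * ∑ k, f y (ξs k))
    (hxbari_mem : xbari ∈ Q)
    (hxbari_min : ∀ y ∈ Q,
      (1 / (N : ℝ)) * ∑ k ∈ univ.erase i, f xbari (ξs k)
        ≤ (1 / (N : ℝ)) * ∑ k ∈ univ.erase i, f y (ξs k)) :
    ‖xbari - xbar‖ ≤ 2 * M / (μ * N) ∧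
    ∀ ξ : Ξ, |f xbari ξ - f xbar ξ| ≤ 2 * M ^ 2 / (μ * N) := by
  have hN : (0 : ℝ) < N := Nat.cast_pos.2 i.pos
  have hNinv : (0 : ℝ) < 1 / N := by positivity
  set F : EuclideanSpace ℝ (Fin n) → ℝ := ∑ k, fun x ↦ f x (ξs k) with hF
  have hF_sc : StrongConvexOn Q (N * μ) F := by
    simpa using StrongConvexOn.sum hQ univ fun k _ ↦
      strongConvexOn_of_le_add_inner hQ fun x hx y hy ↦ hsc (ξs k) x hx y hy
  have hF_min : IsMinOn F Q xbar := fun y hy ↦ by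
    simpa [hF] using le_of_mul_le_mul_left (hxbar_min y hy) hNinv
  have hF_split : F = (fun x ↦ f x (ξs i)) + fun x ↦ ∑ k ∈ univ.erase i, f x (ξs k) := by
    ext x
    simp only [hF, Finset.sum_apply, Pi.add_apply]
    exact (add_sum_erase _ _ (mem_univ i)).symm
  rw [hF_split] at hF_sc hF_min
  have hdist : ‖xbari - xbar‖ ≤ 2 * M / (μ * N) := by
    rw [mul_comm μ]
    exact hF_sc.norm_sub_le_of_isMinOn_add (by positivity) hM.le hxbar_mem hF_min hxbari_mem
      (le_of_mul_le_mul_left (hxbari_min xbar hxbar_mem) hNinv)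
      (hlip (ξs i) xbar hxbar_mem xbari hxbari_mem)
  refine ⟨hdist, fun ξ ↦ ?_⟩
  calc |f xbari ξ - f xbar ξ| ≤ M * ‖xbari - xbar‖ := hlip ξ xbar hxbar_mem xbari hxbari_mem
    _ ≤ M * (2 * M / (μ * N)) := by gcongr
    _ = 2 * M ^ 2 / (μ * N) := by ring

/-- Uniform stability of the empirical minimizer under strong convexity:
the leave-one-out minimizer `x̄⁽ⁱ⁾` satisfies `‖x̄⁽ⁱ⁾ - x̄‖ ≤ 2M/(μN)` and hence
`|f(x̄⁽ⁱ⁾,ξ) - f(x̄,ξ)| ≤ 2M²/(μN)` for all `ξ`. -/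
theorem uniform_stability_erm
    {n : ℕ} {Ξ : Type*} (Q : Set (EuclideanSpace ℝ (Fin n))) (hQ : Convex ℝ Q)
    (f : EuclideanSpace ℝ (Fin n) → Ξ → ℝ)
    (g : EuclideanSpace ℝ (Fin n) → Ξ → EuclideanSpace ℝ (Fin n))
    (μ M : ℝ) (hμ : 0 < μ) (hM : 0 < M)
    (hsc : ∀ ξ, ∀ x ∈ Q, ∀ y ∈ Q,
      f y ξ ≥ f x ξ + ⟪g x ξ, y - x⟫ + μ / 2 * ‖y - x‖ ^ 2)
    (hlip : ∀ ξ, ∀ x ∈ Q, ∀ y ∈ Q, |f y ξ - f x ξ| ≤ M * ‖y - x‖)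
    (N : ℕ) (hN : 0 < N) (ξs : Fin N → Ξ) (i : Fin N)
    (xbar xbari : EuclideanSpace ℝ (Fin n))
    (hxbar_mem : xbar ∈ Q)
    (hxbar_min : ∀ y ∈ Q,
      (1 / (N : ℝ)) * ∑ k, f xbar (ξs k) ≤ (1 / (N : ℝ)) * ∑ k, f y (ξs k))
    (hxbari_mem : xbari ∈ Q)
    (hxbari_min : ∀ y ∈ Q,
      (1 / (N : ℝ)) * ∑ k ∈ univ.erase i, f xbari (ξs k)
        ≤ (1 / (N : ℝ)) * ∑ k ∈ univ.erase i, f y (ξs k)) :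
    ‖xbari - xbar‖ ≤ 2 * M / (μ * N) ∧
    ∀ ξ : Ξ, |f xbari ξ - f xbar ξ| ≤ 2 * M ^ 2 / (μ * N) :=
  uniform_stability_erm_general Q hQ f g μ M hμ hM hsc hlip N ξs i xbar xbari hxbar_mem hxbar_min
    hxbari_mem hxbari_min
end

section
/- Online regret bound of SGD with step γ_k = 1/(μk) in the strongly convex case: for iterates x^{k+1} = π_Q(x^k - γ_k ∇_x f(x^k, ξ^k)) with each f(·,ξ) μ-strongly convex and M-Lipschitz on Q, (1/N)Σ_{k=1}^N f(x^k, ξ^k) ≤ (1/N)Σ_{k=1}^N f(x*, ξ^k) + M²(1 + log N)/(2μN) for any fixed x* ∈ Q. -/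
open Finset RealInnerProductSpace

/-!
Write `rₖ = ‖xᵏ - x*‖²`. Nonexpansiveness of the projection and strong convexity give the
one-step bound `f(xᵏ) - f(x*) ≤ (1/γₖ - μ)/2 · rₖ - 1/(2γₖ) · rₖ₊₁ + γₖ M²/2`. For
`γₖ = 1/(μk)` the coefficients are `μ(k-1)/2` and `μk/2`, so the distance terms telescope to
`-μN/2 · r_{N+1} ≤ 0` and only `M²/(2μ) · Σ 1/k ≤ M²(1 + log N)/(2μ)` survives.
-/

section InnerProductSpace

variable {E : Type*} [NormedAddCommGroup E] [InnerProductSpace ℝ E]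

lemma norm_sub_smul_sub_sq (x z g : E) (γ : ℝ) :
    ‖x - γ • g - z‖ ^ 2 = ‖x - z‖ ^ 2 - 2 * γ * ⟪g, x - z⟫ + γ ^ 2 * ‖g‖ ^ 2 := by
  rw [sub_right_comm, norm_sub_sq_real, inner_smul_right, norm_smul, Real.norm_eq_abs,
    mul_pow, sq_abs, real_inner_comm]
  ring

lemma sub_le_of_projected_step {φ : E → ℝ} {x x' z g : E} {γ μ M : ℝ} (hγ : 0 < γ)
    (hstep : ‖x' - z‖ ≤ ‖x - γ • g - z‖)
    (hsc : φ x + ⟪g, z - x⟫ + μ / 2 * ‖z - x‖ ^ 2 ≤ φ z) (hg : ‖g‖ ≤ M) :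
    φ x - φ z ≤ (1 / γ - μ) / 2 * ‖x - z‖ ^ 2 - 1 / γ / 2 * ‖x' - z‖ ^ 2 + γ / 2 * M ^ 2 := by
  have hdist : ‖x' - z‖ ^ 2 ≤ ‖x - z‖ ^ 2 - 2 * γ * ⟪g, x - z⟫ + γ ^ 2 * M ^ 2 := by
    calc ‖x' - z‖ ^ 2 ≤ ‖x - γ • g - z‖ ^ 2 := by gcongr
      _ ≤ _ := by
        rw [norm_sub_smul_sub_sq]
        gcongr
  have hinner : ⟪g, x - z⟫ ≤ (‖x - z‖ ^ 2 - ‖x' - z‖ ^ 2) / (2 * γ) + γ / 2 * M ^ 2 := by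
    rw [div_add' _ _ _ (by positivity), le_div_iff₀ (by positivity)]
    nlinarith
  rw [← neg_sub x z, inner_neg_right, norm_neg] at hsc
  have hsplit : (1 / γ - μ) / 2 * ‖x - z‖ ^ 2 - 1 / γ / 2 * ‖x' - z‖ ^ 2
      = (‖x - z‖ ^ 2 - ‖x' - z‖ ^ 2) / (2 * γ) - μ / 2 * ‖x - z‖ ^ 2 := by
    field_simp
    ring
  linarith

lemma sum_sub_le_of_projected_sgd {ℓ : ℕ → E → ℝ} {x g : ℕ → E} {z : E} {μ M : ℝ}
    (hμ : 0 < μ) (N : ℕ)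
    (hstep : ∀ k ∈ Icc 1 N, ‖x (k + 1) - z‖ ≤ ‖x k - (1 / (μ * k)) • g k - z‖)
    (hsc : ∀ k ∈ Icc 1 N, ℓ k (x k) + ⟪g k, z - x k⟫ + μ / 2 * ‖z - x k‖ ^ 2 ≤ ℓ k z)
    (hg : ∀ k ∈ Icc 1 N, ‖g k‖ ≤ M) :
    ∑ k ∈ Icc 1 N, (ℓ k (x k) - ℓ k z) ≤ M ^ 2 / (2 * μ) * ∑ k ∈ Icc 1 N, 1 / (k : ℝ) := by
  set a : ℕ → ℝ := fun k => μ / 2 * ((k - 1) * ‖x k - z‖ ^ 2)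
  have hgap : ∀ k ∈ Icc 1 N,
      ℓ k (x k) - ℓ k z ≤ (a k - a (k + 1)) + M ^ 2 / (2 * μ) * (1 / (k : ℝ)) := by
    intro k hk
    have hγ : 0 < 1 / (μ * k) := by
      have : (0 : ℝ) < k := by exact_mod_cast (mem_Icc.mp hk).1
      positivity
    convert sub_le_of_projected_step hγ (hstep k hk) (hsc k hk) (hg k hk) using 2
    · simp only [a, Nat.cast_add, Nat.cast_one]
      field_simp
      ring
    · field_simp
  have htel : ∑ k ∈ Icc 1 N, (a k - a (k + 1)) = -a (N + 1) := by
    have ha1 : a 1 = 0 := by simp [a]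
    rw [← Ico_add_one_right_eq_Icc, ← neg_eq_iff_eq_neg, ← sum_neg_distrib]
    simp only [neg_sub]
    rw [sum_Ico_sub (f := a) (by omega), ha1, sub_zero]
  have ha_nonneg : 0 ≤ a (N + 1) := by
    simp only [a, Nat.cast_add, Nat.cast_one, add_sub_cancel_right]
    positivity
  calc ∑ k ∈ Icc 1 N, (ℓ k (x k) - ℓ k z)
      ≤ ∑ k ∈ Icc 1 N, ((a k - a (k + 1)) + M ^ 2 / (2 * μ) * (1 / (k : ℝ))) :=
        sum_le_sum hgap
    _ = -a (N + 1) + M ^ 2 / (2 * μ) * ∑ k ∈ Icc 1 N, 1 / (k : ℝ) := by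
        rw [sum_add_distrib, htel, mul_sum]
    _ ≤ M ^ 2 / (2 * μ) * ∑ k ∈ Icc 1 N, 1 / (k : ℝ) := by linarith

end InnerProductSpace
lemma sum_Icc_one_div_le_one_add_log (N : ℕ) :
    ∑ k ∈ Icc 1 N, 1 / (k : ℝ) ≤ 1 + Real.log N := by
  simpa only [harmonic_eq_sum_Icc, Rat.cast_sum, Rat.cast_inv, Rat.cast_natCast, one_div]
    using harmonic_le_one_add_log N

theorem projected_sgd_regret_strongly_convex_general
    {n : ℕ} {Ξ : Type*} (Q : Set (EuclideanSpace ℝ (Fin n)))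
    (proj : EuclideanSpace ℝ (Fin n) → EuclideanSpace ℝ (Fin n))
    (hproj_nonexp : ∀ u, ∀ z ∈ Q, ‖proj u - z‖ ≤ ‖u - z‖)
    (f : EuclideanSpace ℝ (Fin n) → Ξ → ℝ)
    (N : ℕ) (ξ : ℕ → Ξ)
    (M μ : ℝ) (hμ : 0 < μ)
    (x : ℕ → EuclideanSpace ℝ (Fin n)) (g : ℕ → EuclideanSpace ℝ (Fin n))
    (xstar : EuclideanSpace ℝ (Fin n)) (hxstar : xstar ∈ Q)
    (hgsub : ∀ k ∈ Icc 1 N, ∀ z ∈ Q,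
      f z (ξ k) ≥ f (x k) (ξ k) + ⟪g k, z - x k⟫ + μ / 2 * ‖z - x k‖ ^ 2)
    (hgbdd : ∀ k ∈ Icc 1 N, ‖g k‖ ≤ M)
    (hiter : ∀ k ∈ Icc 1 N, x (k + 1) = proj (x k - (1 / (μ * k)) • g k)) :
    (1 / (N : ℝ)) * ∑ k ∈ Icc 1 N, f (x k) (ξ k)
      ≤ (1 / (N : ℝ)) * ∑ k ∈ Icc 1 N, f xstar (ξ k)
        + M ^ 2 * (1 + Real.log N) / (2 * μ * N) := by
  have hregret : ∑ k ∈ Icc 1 N, (f (x k) (ξ k) - f xstar (ξ k))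
      ≤ M ^ 2 / (2 * μ) * (1 + Real.log N) :=
    (sum_sub_le_of_projected_sgd (ℓ := fun k y => f y (ξ k)) hμ N
      (fun k hk => hiter k hk ▸ hproj_nonexp _ xstar hxstar)
      (fun k hk => hgsub k hk xstar hxstar) hgbdd).trans
      (mul_le_mul_of_nonneg_left (sum_Icc_one_div_le_one_add_log N) (by positivity))
  rw [sum_sub_distrib] at hregret
  have hscaled := mul_le_mul_of_nonneg_left hregret (by positivity : (0 : ℝ) ≤ 1 / N)
  have hrhs : 1 / (N : ℝ) * (M ^ 2 / (2 * μ) * (1 + Real.log N))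
      = M ^ 2 * (1 + Real.log N) / (2 * μ * N) := by ring
  linarith

/-- Online regret bound for projected SGD with step `γₖ = 1/(μk)` in the strongly
convex case: `(1/N)Σₖ f(xᵏ,ξᵏ) ≤ (1/N)Σₖ f(x*,ξᵏ) + M²(1 + log N)/(2μN)`. -/
theorem projected_sgd_regret_strongly_convex
    {n : ℕ} {Ξ : Type*} (Q : Set (EuclideanSpace ℝ (Fin n))) (hQne : Q.Nonempty)
    (hQconv : Convex ℝ Q) (hQclosed : IsClosed Q)
    (proj : EuclideanSpace ℝ (Fin n) → EuclideanSpace ℝ (Fin n))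
    (hproj_mem : ∀ u, proj u ∈ Q)
    (hproj_nonexp : ∀ u, ∀ z ∈ Q, ‖proj u - z‖ ≤ ‖u - z‖)
    (f : EuclideanSpace ℝ (Fin n) → Ξ → ℝ)
    (N : ℕ) (hN : 0 < N) (ξ : ℕ → Ξ)
    (M μ : ℝ) (hM : 0 < M) (hμ : 0 < μ)
    (x : ℕ → EuclideanSpace ℝ (Fin n)) (g : ℕ → EuclideanSpace ℝ (Fin n))
    (hx1 : x 1 ∈ Q)
    (xstar : EuclideanSpace ℝ (Fin n)) (hxstar : xstar ∈ Q)
    (hgsub : ∀ k ∈ Icc 1 N, ∀ z ∈ Q,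
      f z (ξ k) ≥ f (x k) (ξ k) + ⟪g k, z - x k⟫ + μ / 2 * ‖z - x k‖ ^ 2)
    (hgbdd : ∀ k ∈ Icc 1 N, ‖g k‖ ≤ M)
    (hiter : ∀ k ∈ Icc 1 N, x (k + 1) = proj (x k - (1 / (μ * k)) • g k)) :
    (1 / (N : ℝ)) * ∑ k ∈ Icc 1 N, f (x k) (ξ k)
      ≤ (1 / (N : ℝ)) * ∑ k ∈ Icc 1 N, f xstar (ξ k)
        + M ^ 2 * (1 + Real.log N) / (2 * μ * N) :=
  projected_sgd_regret_strongly_convex_general Q proj hproj_nonexp f N ξ M μ hμ x g xstar hxstar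
    hgsub hgbdd hiter
end

section
/- One-step linear contraction of SGD under overparametrization-type conditions: with the assumptions of the previous statement plus μ-strong convexity of f in the sense f(x*) ≥ f(x) + ⟨∇f(x), x* - x⟩ + (μ/2)‖x* - x‖₂², the SGD step x⁺ = x - γ∇_x f(x,ξ) with γ ≤ 1/(2L) satisfies E_ξ[‖x⁺ - x*‖₂²] ≤ (1 - γμ)‖x - x*‖₂² + 2γ²σ*². -/
open MeasureTheory RealInnerProductSpace

/-!
Write `d = x - x*` and `ḡ = E ∇f(x,ξ)`. Expanding the square,
`E‖x⁺ - x*‖² = ‖d‖² - 2γ⟪d, ḡ⟫ + γ² E‖∇f(x,ξ)‖²`, and strong convexity bounds `⟪d, ḡ⟫` below by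
`F x - F x* + (μ/2)‖d‖²`. Co-coercivity of each convex `L`-smooth `f(·,ξ)`,
`‖∇f(x,ξ) - ∇f(x*,ξ)‖² ≤ 2L (f(x,ξ) - f(x*,ξ) - ⟪∇f(x*,ξ), d⟫)`, averages (using
`E ∇f(x*,ξ) = 0`) to `E‖∇f(x,ξ)‖² ≤ 4L (F x - F x*) + 2σ*²`. The leftover term
`-2γ(1 - 2γL)(F x - F x*)` is nonpositive because `γ ≤ 1/(2L)` and `x*` minimizes `F`.
-/

section Smooth

variable {E : Type*} [NormedAddCommGroup E] [InnerProductSpace ℝ E] [CompleteSpace E]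
  {g : E → ℝ} {g' : E → E}

theorem HasGradientAt.hasDerivAt_comp_add_smul {x v g'x : E} {t : ℝ}
    (hg : HasGradientAt g g'x (x + t • v)) :
    HasDerivAt (fun s : ℝ => g (x + s • v)) ⟪g'x, v⟫ t := by
  have hline : HasDerivAt (fun s : ℝ => x + s • v) v t := by
    simpa using ((hasDerivAt_id t).smul_const v).const_add x
  simpa [Function.comp_def] using hg.hasFDerivAt.comp_hasDerivAt t hline

theorem ConvexOn.add_inner_le_of_hasGradientAt (hconv : ConvexOn ℝ Set.univ g) {x g'x : E}
    (hg : HasGradientAt g g'x x) (y : E) : g x + ⟪g'x, y - x⟫ ≤ g y := by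
  have hline : ConvexOn ℝ Set.univ (fun s : ℝ => g (x + s • (y - x))) := by
    simpa [Function.comp_def, AffineMap.lineMap_apply, add_comm]
      using hconv.comp_affineMap (AffineMap.lineMap x y)
  have hderiv : HasDerivAt (fun s : ℝ => g (x + s • (y - x))) ⟪g'x, y - x⟫ 0 :=
    HasGradientAt.hasDerivAt_comp_add_smul (by simpa using hg)
  have := hline.le_slope_of_hasDerivAt (Set.mem_univ 0) (Set.mem_univ 1) one_pos hderiv
  simp only [slope_def_field, one_smul, add_sub_cancel, zero_smul, add_zero, sub_zero, div_one]
    at this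
  linarith

theorem le_add_inner_add_of_lipschitz_gradient (hg : ∀ z, HasGradientAt g (g' z) z) {L : ℝ}
    (hlip : ∀ u v, ‖g' u - g' v‖ ≤ L * ‖u - v‖) (x y : E) :
    g y ≤ g x + ⟪g' x, y - x⟫ + L / 2 * ‖y - x‖ ^ 2 := by
  set v := y - x
  set φ : ℝ → ℝ := fun s => g (x + s • v) - s * ⟪g' x, v⟫ - L / 2 * s ^ 2 * ‖v‖ ^ 2
  have hφ : ∀ s, HasDerivAt φ (⟪g' (x + s • v), v⟫ - ⟪g' x, v⟫ - L * s * ‖v‖ ^ 2) s := by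
    intro s
    refine ((((hg (x + s • v)).hasDerivAt_comp_add_smul).sub
      ((hasDerivAt_id s).mul_const ⟪g' x, v⟫)).sub
      (((hasDerivAt_pow 2 s).const_mul (L / 2)).mul_const (‖v‖ ^ 2))).congr_deriv ?_
    simp only [Nat.cast_ofNat]
    ring
  have hφ' : ∀ s ∈ interior (Set.Ici (0 : ℝ)),
      ⟪g' (x + s • v), v⟫ - ⟪g' x, v⟫ - L * s * ‖v‖ ^ 2 ≤ 0 := by
    intro s hs
    rw [interior_Ici, Set.mem_Ioi] at hs
    have hgrowth : ‖g' (x + s • v) - g' x‖ ≤ L * s * ‖v‖ := by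
      simpa [norm_smul, abs_of_pos hs, mul_assoc] using hlip (x + s • v) x
    have := (real_inner_le_norm _ v).trans (mul_le_mul_of_nonneg_right hgrowth (norm_nonneg v))
    rw [inner_sub_left] at this
    nlinarith
  have hanti : AntitoneOn φ (Set.Ici 0) :=
    antitoneOn_of_hasDerivWithinAt_nonpos (convex_Ici 0)
      (HasDerivAt.continuousOn fun s _ => hφ s) (fun s _ => (hφ s).hasDerivWithinAt) hφ'
  have := hanti Set.self_mem_Ici (Set.mem_Ici.2 zero_le_one) zero_le_one
  simp only [φ, v, one_smul, add_sub_cancel, one_mul, one_pow, mul_one, zero_smul, add_zero,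
    zero_mul, sub_zero, ne_eq, OfNat.ofNat_ne_zero, not_false_eq_true, zero_pow, mul_zero] at this
  linarith

theorem ConvexOn.norm_sub_gradient_sq_le (hconv : ConvexOn ℝ Set.univ g)
    (hg : ∀ z, HasGradientAt g (g' z) z) {L : ℝ} (hL : 0 < L)
    (hlip : ∀ u v, ‖g' u - g' v‖ ≤ L * ‖u - v‖) (x y : E) :
    ‖g' y - g' x‖ ^ 2 ≤ 2 * L * (g y - g x - ⟪g' x, y - x⟫) := by
  -- compare `g` at the gradient step `z` from `y` with its tangent at `x` and its upper model at `y`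
  set w := g' y - g' x
  set z := y - L⁻¹ • w
  have hlower := hconv.add_inner_le_of_hasGradientAt (hg x) z
  have hupper := le_add_inner_add_of_lipschitz_gradient hg hlip y z
  have hzy : z - y = -(L⁻¹ • w) := by simp [z]
  have hzx : z - x = (y - x) + (z - y) := by abel
  rw [hzx, inner_add_right] at hlower
  have hkey : ⟪g' y, z - y⟫ - ⟪g' x, z - y⟫ + L / 2 * ‖z - y‖ ^ 2 = -(‖w‖ ^ 2 / (2 * L)) := by
    rw [← inner_sub_left, hzy, inner_neg_right, real_inner_smul_right, real_inner_self_eq_norm_sq,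
      norm_neg, norm_smul, Real.norm_eq_abs, abs_of_pos (inv_pos.2 hL)]
    field_simp
    ring
  have : ‖w‖ ^ 2 / (2 * L) ≤ g y - g x - ⟪g' x, y - x⟫ := by linarith
  rwa [div_le_iff₀ (by positivity), mul_comm] at this

end Smooth

section Stochastic

variable {E : Type*} [NormedAddCommGroup E] [InnerProductSpace ℝ E] [CompleteSpace E]
  {Ξ : Type*} [MeasurableSpace Ξ] {ν : Measure Ξ}

theorem integral_norm_sub_smul_sq [IsProbabilityMeasure ν] {X : Ξ → E} (hX : Integrable X ν)
    (hX2 : Integrable (fun ξ => ‖X ξ‖ ^ 2) ν) (d : E) (γ : ℝ) :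
    ∫ ξ, ‖d - γ • X ξ‖ ^ 2 ∂ν = ‖d‖ ^ 2 - 2 * γ * ⟪d, ∫ ξ, X ξ ∂ν⟫ + γ ^ 2 * ∫ ξ, ‖X ξ‖ ^ 2 ∂ν := by
  have hexpand : ∀ ξ, ‖d - γ • X ξ‖ ^ 2 = ‖d‖ ^ 2 - 2 * γ * ⟪d, X ξ⟫ + γ ^ 2 * ‖X ξ‖ ^ 2 := by
    intro ξ
    rw [norm_sub_sq_real, real_inner_smul_right, norm_smul, mul_pow, Real.norm_eq_abs, sq_abs]
    ring
  have hinner : Integrable (fun ξ => ⟪d, X ξ⟫) ν := hX.const_inner d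
  simp_rw [hexpand]
  rw [integral_add (Integrable.sub' (integrable_const _) (hinner.const_mul _)) (hX2.const_mul _),
    integral_sub (integrable_const _) (hinner.const_mul _), integral_const, integral_const_mul,
    integral_const_mul, integral_inner hX d]
  simp

variable {f : E → Ξ → ℝ} {G : E → Ξ → E} {x xstar : E}

theorem integral_sub_sub_inner_eq (hfint : ∀ x, Integrable (fun ξ => f x ξ) ν)
    (hGint : Integrable (fun ξ => G xstar ξ) ν) (hmin : ∫ ξ, G xstar ξ ∂ν = 0) :
    ∫ ξ, (f x ξ - f xstar ξ - ⟪G xstar ξ, x - xstar⟫) ∂ν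
      = ∫ ξ, f x ξ ∂ν - ∫ ξ, f xstar ξ ∂ν := by
  simp_rw [real_inner_comm (x - xstar)]
  rw [integral_sub ((hfint x).sub' (hfint xstar)) (hGint.const_inner _),
    integral_sub (hfint x) (hfint xstar), integral_inner hGint, hmin, inner_zero_right, sub_zero]

theorem integral_le_integral_of_integral_gradient_eq_zero
    (hconv : ∀ ξ, ConvexOn ℝ Set.univ (fun x => f x ξ))
    (hgrad : ∀ ξ, HasGradientAt (fun y => f y ξ) (G xstar ξ) xstar)
    (hfint : ∀ x, Integrable (fun ξ => f x ξ) ν)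
    (hGint : Integrable (fun ξ => G xstar ξ) ν) (hmin : ∫ ξ, G xstar ξ ∂ν = 0) :
    ∫ ξ, f xstar ξ ∂ν ≤ ∫ ξ, f x ξ ∂ν := by
  rw [← sub_nonneg, ← integral_sub_sub_inner_eq hfint hGint hmin]
  refine integral_nonneg fun ξ => ?_
  simp only [Pi.zero_apply]
  linarith [(hconv ξ).add_inner_le_of_hasGradientAt (hgrad ξ) x]

theorem integral_norm_sq_le_of_lipschitz_gradient
    (hconv : ∀ ξ, ConvexOn ℝ Set.univ (fun x => f x ξ))
    (hgrad : ∀ ξ x, HasGradientAt (fun y => f y ξ) (G x ξ) x) {L : ℝ} (hL : 0 < L)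
    (hlip : ∀ ξ x y, ‖G x ξ - G y ξ‖ ≤ L * ‖x - y‖)
    (hfint : ∀ x, Integrable (fun ξ => f x ξ) ν) (hGint : Integrable (fun ξ => G xstar ξ) ν)
    (hGsqint : ∀ x, Integrable (fun ξ => ‖G x ξ‖ ^ 2) ν) (hmin : ∫ ξ, G xstar ξ ∂ν = 0) :
    ∫ ξ, ‖G x ξ‖ ^ 2 ∂ν
      ≤ 4 * L * (∫ ξ, f x ξ ∂ν - ∫ ξ, f xstar ξ ∂ν) + 2 * ∫ ξ, ‖G xstar ξ‖ ^ 2 ∂ν := by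
  have hpointwise : ∀ ξ, ‖G x ξ‖ ^ 2
      ≤ 4 * L * (f x ξ - f xstar ξ - ⟪G xstar ξ, x - xstar⟫) + 2 * ‖G xstar ξ‖ ^ 2 := by
    intro ξ
    have hcoercive := (hconv ξ).norm_sub_gradient_sq_le (hgrad ξ) hL (hlip ξ) xstar x
    have htriangle : ‖G x ξ‖ ^ 2 ≤ 2 * (‖G xstar ξ‖ ^ 2 + ‖G x ξ - G xstar ξ‖ ^ 2) :=
      (pow_le_pow_left₀ (norm_nonneg _) (norm_le_norm_add_norm_sub' _ _) 2).trans add_sq_le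
    linarith
  have hbregman : Integrable (fun ξ => f x ξ - f xstar ξ - ⟪G xstar ξ, x - xstar⟫) ν :=
    ((hfint x).sub' (hfint xstar)).sub' (hGint.inner_const _)
  calc ∫ ξ, ‖G x ξ‖ ^ 2 ∂ν
      ≤ ∫ ξ, (4 * L * (f x ξ - f xstar ξ - ⟪G xstar ξ, x - xstar⟫) + 2 * ‖G xstar ξ‖ ^ 2) ∂ν :=
        integral_mono (hGsqint x) ((hbregman.const_mul _).add ((hGsqint xstar).const_mul _))
          hpointwise
    _ = 4 * L * (∫ ξ, f x ξ ∂ν - ∫ ξ, f xstar ξ ∂ν) + 2 * ∫ ξ, ‖G xstar ξ‖ ^ 2 ∂ν := by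
        rw [integral_add (hbregman.const_mul _) ((hGsqint xstar).const_mul _), integral_const_mul,
          integral_const_mul, integral_sub_sub_inner_eq hfint hGint hmin]

end Stochastic

theorem sgd_one_step_contraction_general
    {n : ℕ} {Ξ : Type*} [MeasurableSpace Ξ] (ν : Measure Ξ) [IsProbabilityMeasure ν]
    (f : EuclideanSpace ℝ (Fin n) → Ξ → ℝ)
    (G : EuclideanSpace ℝ (Fin n) → Ξ → EuclideanSpace ℝ (Fin n))
    (L μ : ℝ) (hL : 0 < L)
    (hconv : ∀ ξ, ConvexOn ℝ Set.univ (fun x => f x ξ))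
    (hgrad : ∀ ξ x, HasGradientAt (fun y => f y ξ) (G x ξ) x)
    (hlip : ∀ ξ x y, ‖G x ξ - G y ξ‖ ≤ L * ‖x - y‖)
    (F : EuclideanSpace ℝ (Fin n) → ℝ) (hF : ∀ x, F x = ∫ ξ, f x ξ ∂ν)
    (hfint : ∀ x, Integrable (fun ξ => f x ξ) ν)
    (hGint : ∀ x, Integrable (fun ξ => G x ξ) ν)
    (hGsqint : ∀ x, Integrable (fun ξ => ‖G x ξ‖ ^ 2) ν)
    (xstar : EuclideanSpace ℝ (Fin n)) (hmin : ∫ ξ, G xstar ξ ∂ν = 0)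
    (hsc : ∀ x, F xstar ≥ F x + ⟪∫ ξ, G x ξ ∂ν, xstar - x⟫ + μ / 2 * ‖xstar - x‖ ^ 2)
    (σstar2 : ℝ) (hσ : σstar2 = ∫ ξ, ‖G xstar ξ‖ ^ 2 ∂ν)
    (γ : ℝ) (hγ0 : 0 < γ) (hγ : γ ≤ 1 / (2 * L)) :
    ∀ x, (∫ ξ, ‖(x - γ • G x ξ) - xstar‖ ^ 2 ∂ν)
      ≤ (1 - γ * μ) * ‖x - xstar‖ ^ 2 + 2 * γ ^ 2 * σstar2 := by
  intro x
  have hgap : F xstar ≤ F x := by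
    rw [hF, hF]
    exact integral_le_integral_of_integral_gradient_eq_zero hconv (fun ξ => hgrad ξ xstar) hfint
      (hGint xstar) hmin
  have hnoise : ∫ ξ, ‖G x ξ‖ ^ 2 ∂ν ≤ 4 * L * (F x - F xstar) + 2 * σstar2 := by
    rw [hF, hF, hσ]
    exact integral_norm_sq_le_of_lipschitz_gradient hconv hgrad hL hlip hfint (hGint xstar)
      hGsqint hmin
  have hstrong : F x - F xstar + μ / 2 * ‖x - xstar‖ ^ 2 ≤ ⟪x - xstar, ∫ ξ, G x ξ ∂ν⟫ := by
    have := hsc x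
    rw [← neg_sub x xstar, inner_neg_right, norm_neg, real_inner_comm] at this
    linarith
  have hstep : 2 * γ * L ≤ 1 := by
    rw [le_div_iff₀ (by positivity)] at hγ
    linarith
  simp_rw [sub_right_comm x _ xstar]
  rw [integral_norm_sub_smul_sq (hGint x) (hGsqint x)]
  linarith [mul_le_mul_of_nonneg_left hnoise (sq_nonneg γ),
    mul_le_mul_of_nonneg_left hstrong (by positivity : (0 : ℝ) ≤ 2 * γ),
    mul_nonneg (mul_nonneg hγ0.le (sub_nonneg.2 hstep)) (sub_nonneg.2 hgap)]

/-- One-step linear contraction of SGD under overparametrization-type conditions: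
with `γ ≤ 1/(2L)`, `E_ξ‖x - γ∇f(x,ξ) - x*‖² ≤ (1 - γμ)‖x - x*‖² + 2γ²σ*²`. -/
theorem sgd_one_step_contraction
    {n : ℕ} {Ξ : Type*} [MeasurableSpace Ξ] (ν : Measure Ξ) [IsProbabilityMeasure ν]
    (f : EuclideanSpace ℝ (Fin n) → Ξ → ℝ)
    (G : EuclideanSpace ℝ (Fin n) → Ξ → EuclideanSpace ℝ (Fin n))
    (L μ : ℝ) (hL : 0 < L) (hμ : 0 < μ)
    (hconv : ∀ ξ, ConvexOn ℝ Set.univ (fun x => f x ξ))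
    (hgrad : ∀ ξ x, HasGradientAt (fun y => f y ξ) (G x ξ) x)
    (hlip : ∀ ξ x y, ‖G x ξ - G y ξ‖ ≤ L * ‖x - y‖)
    (F : EuclideanSpace ℝ (Fin n) → ℝ) (hF : ∀ x, F x = ∫ ξ, f x ξ ∂ν)
    (hfint : ∀ x, Integrable (fun ξ => f x ξ) ν)
    (hGint : ∀ x, Integrable (fun ξ => G x ξ) ν)
    (hGsqint : ∀ x, Integrable (fun ξ => ‖G x ξ‖ ^ 2) ν)
    (xstar : EuclideanSpace ℝ (Fin n)) (hmin : ∫ ξ, G xstar ξ ∂ν = 0)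
    (hsc : ∀ x, F xstar ≥ F x + ⟪∫ ξ, G x ξ ∂ν, xstar - x⟫ + μ / 2 * ‖xstar - x‖ ^ 2)
    (σstar2 : ℝ) (hσ : σstar2 = ∫ ξ, ‖G xstar ξ‖ ^ 2 ∂ν)
    (γ : ℝ) (hγ0 : 0 < γ) (hγ : γ ≤ 1 / (2 * L)) :
    ∀ x, (∫ ξ, ‖(x - γ • G x ξ) - xstar‖ ^ 2 ∂ν)
      ≤ (1 - γ * μ) * ‖x - xstar‖ ^ 2 + 2 * γ ^ 2 * σstar2 :=
  sgd_one_step_contraction_general ν f G L μ hL hconv hgrad hlip F hF hfint hGint hGsqint xstar hmin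
    hsc σstar2 hσ γ hγ0 hγ
end
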